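/- Let C be a linear code of length n over a finite commutative Frobenius ring R. Then the Hamming weight enumerators satisfy W_{C⊥}(x, y) = (1/|C|) · W_C(x + (|R| − 1)y, x − y), as an identity of polynomials in x and y. -/

import Mathlib

noncomputable section
open scoped BigOperators

/-- The dual of a linear code `C ⊆ Rⁿ` with respect to the standard inner
product `u·v = ∑ ℓ, u ℓ * v ℓ`. -/
def dualCode {R : Type*} [CommRing R] {n : ℕ} (C : Submodule R (Fin n → R)) :
    Submodule R (Fin n → R) where
  carrier := {v | ∀ u ∈ C, ∑ ℓ, u ℓ * v ℓ = 0}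
  add_mem' := by
    intro v w hv hw u hu
    simp only [Set.mem_setOf_eq] at *
    have h1 := hv u hu
    have h2 := hw u hu
    simp only [Pi.add_apply, mul_add, Finset.sum_add_distrib, h1, h2, add_zero]
  zero_mem' := by
    intro u hu
    simp
  smul_mem' := by
    intro c v hv u hu
    simp only [Set.mem_setOf_eq] at *
    have h := hv u hu
    have : ∑ ℓ, u ℓ * (c • v) ℓ = c * ∑ ℓ, u ℓ * v ℓ := by
      rw [Finset.mul_sum]
      exact Finset.sum_congr rfl fun ℓ _ => by
        simp only [Pi.smul_apply, smul_eq_mul]; ring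
    rw [this, h, mul_zero]

/-- A finite commutative ring is Frobenius iff `|C|·|C⊥| = |R|ⁿ` for every
linear code `C` of every length `n` over `R`. -/
def IsFrobeniusRing (R : Type*) [CommRing R] [Fintype R] : Prop :=
  ∀ (n : ℕ) (C : Submodule R (Fin n → R)),
    Nat.card C * Nat.card (dualCode C) = Fintype.card R ^ n

open MvPolynomial

/-- The Hamming weight of a word `c ∈ Rⁿ`. -/
def hwt {R : Type*} [CommRing R] {n : ℕ} (c : Fin n → R) : ℕ :=
  Nat.card {ℓ : Fin n // c ℓ ≠ 0}

/-- The Hamming weight enumerator `W_C(x, y) = ∑_{c ∈ C} x^(n - wt c) * y^(wt c)`,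
as a polynomial in the two variables `X 0 = x` and `X 1 = y`. -/
def hwEnum {R : Type*} [CommRing R] [Fintype R] {n : ℕ}
    (C : Submodule R (Fin n → R)) : MvPolynomial (Fin 2) ℚ :=
  haveI : Fintype C := Fintype.ofFinite C
  ∑ c : C, X 0 ^ (n - hwt (c : Fin n → R)) * X 1 ^ hwt (c : Fin n → R)


/-!
Write `A_D(S)` for the number of words of a code `D` vanishing on the coordinate set `S`.
Expanding `x = (x - y) + y` over the zero coordinates of each word gives
`W_D(x, y) = ∑_S A_D(S) (x - y)^|S| y^(n - |S|)`.

A word of `C⊥` vanishing on `S` is the same as a word of the dual of the punctured code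
`C|_{Sᶜ}`, and `C` maps onto `C|_{Sᶜ}` with kernel the words vanishing on `Sᶜ`; so the Frobenius
property for `C|_{Sᶜ}` gives `|C| · A_{C⊥}(S) = |R|^(n - |S|) · A_C(Sᶜ)`. The substitution
`x ↦ x + (|R| - 1) y`, `y ↦ x - y` turns `x - y` into `|R| y`, and after reindexing by `S ↦ Sᶜ`
the two expansions agree term by term.
-/

open Finset Function

section

variable {R : Type*} [CommRing R] {n : ℕ}

def vanishingCount (D : Submodule R (Fin n → R)) (S : Finset (Fin n)) : ℕ :=
  Nat.card {c : D // ∀ ℓ ∈ S, (c : Fin n → R) ℓ = 0}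

theorem card_filter_eq_zero_add_hwt [DecidableEq R] (c : Fin n → R) :
    #{ℓ | c ℓ = 0} + hwt c = n := by
  rw [hwt, Nat.card_eq_fintype_card, Fintype.card_subtype, card_filter_add_card_filter_not,
    card_univ, Fintype.card_fin]

theorem pow_sub_hwt_mul_pow_hwt {A : Type*} [CommRing A] [DecidableEq R] (s a : A)
    (c : Fin n → R) :
    s ^ (n - hwt c) * a ^ hwt c =
      ∑ S ∈ ({ℓ | c ℓ = 0} : Finset (Fin n)).powerset, (s - a) ^ #S * a ^ (n - #S) := by
  set Z : Finset (Fin n) := {ℓ | c ℓ = 0}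
  have hZ : #Z + hwt c = n := card_filter_eq_zero_add_hwt c
  rw [show hwt c = n - #Z by omega, show n - (n - #Z) = #Z by omega, ← sub_add_cancel s a,
    ← sum_pow_mul_eq_add_pow, sub_add_cancel, sum_mul]
  refine sum_congr rfl fun S hS => ?_
  have hSZ : #S ≤ #Z := card_le_card (mem_powerset.1 hS)
  rw [mul_assoc, ← pow_add]
  congr 2
  omega

theorem sum_pow_sub_hwt_mul_pow_hwt {A : Type*} [CommRing A] (D : Submodule R (Fin n → R))
    [Fintype D] (s a : A) :
    ∑ c : D, s ^ (n - hwt (c : Fin n → R)) * a ^ hwt (c : Fin n → R) =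
      ∑ S : Finset (Fin n), (vanishingCount D S : A) * (s - a) ^ #S * a ^ (n - #S) := by
  classical
  simp_rw [pow_sub_hwt_mul_pow_hwt]
  rw [sum_comm' (s' := fun S => ({c : D | ∀ ℓ ∈ S, (c : Fin n → R) ℓ = 0} : Finset D))
    (t' := univ) (by simp [subset_iff])]
  refine sum_congr rfl fun S _ => ?_
  rw [sum_const, nsmul_eq_mul, mul_assoc, vanishingCount, Nat.card_eq_fintype_card,
    Fintype.card_subtype]

theorem bind₁_hwEnum [Fintype R] {σ : Type*} (D : Submodule R (Fin n → R))
    (f : Fin 2 → MvPolynomial σ ℚ) :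
    bind₁ f (hwEnum D) =
      ∑ S : Finset (Fin n), C (vanishingCount D S : ℚ) * (f 0 - f 1) ^ #S * f 1 ^ (n - #S) := by
  let _ : Fintype D := Fintype.ofFinite D
  rw [hwEnum, map_sum]
  simp only [map_mul, map_pow, bind₁_X_right, map_natCast]
  exact sum_pow_sub_hwt_mul_pow_hwt D (f 0) (f 1)

theorem Submodule.card_eq_card_map_mul_card_ker {M N : Type*} [AddCommGroup M] [Module R M]
    [AddCommGroup N] [Module R N] (f : M →ₗ[R] N) (C : Submodule R M) :
    Nat.card C = Nat.card (C.map f) * Nat.card (LinearMap.ker (f.domRestrict C)) := by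
  rw [Submodule.card_eq_card_quotient_mul_card (LinearMap.ker (f.domRestrict C)),
    Nat.card_congr (f.domRestrict C).quotKerEquivRange.toEquiv, LinearMap.range_domRestrict,
    mul_comm]

section Puncture

variable {m : ℕ} {ι : Fin m → Fin n}

theorem sum_mul_comp_of_eq_zero (hι : Injective ι) {u v : Fin n → R}
    (hv : ∀ ℓ ∉ Set.range ι, v ℓ = 0) :
    ∑ j, u (ι j) * v (ι j) = ∑ ℓ, u ℓ * v ℓ :=
  Fintype.sum_of_injective ι hι _ _ (fun ℓ hℓ => by rw [hv ℓ hℓ, mul_zero]) fun _ => rfl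

def dualCodeSupportedEquiv (hι : Injective ι) (C : Submodule R (Fin n → R)) :
    {v : dualCode C // ∀ ℓ ∉ Set.range ι, (v : Fin n → R) ℓ = 0} ≃
      dualCode (C.map (LinearMap.funLeft R R ι)) where
  toFun v := ⟨(v : Fin n → R) ∘ ι, by
    rintro _ ⟨u, hu, rfl⟩
    exact (sum_mul_comp_of_eq_zero hι v.2).trans (v.1.2 u hu)⟩
  invFun w :=
    have hw : ∀ ℓ ∉ Set.range ι, extend ι (w : Fin m → R) 0 ℓ = 0 := fun ℓ hℓ =>
      extend_apply' (w : Fin m → R) (0 : Fin n → R) ℓ hℓ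
    ⟨⟨extend ι w 0, fun u hu => by
      rw [← sum_mul_comp_of_eq_zero hι hw]
      simp only [hι.extend_apply]
      exact w.2 _ (Submodule.mem_map_of_mem hu)⟩, hw⟩
  left_inv v := by
    ext ℓ
    by_cases hℓ : ℓ ∈ Set.range ι
    · obtain ⟨j, rfl⟩ := hℓ
      exact hι.extend_apply _ _ j
    · exact (extend_apply' ((v : Fin n → R) ∘ ι) (0 : Fin n → R) ℓ hℓ).trans (v.2 ℓ hℓ).symm
  right_inv w := by
    ext j
    exact hι.extend_apply _ _ j

end Puncture

theorem vanishingCount_dualCode_mul_card [Fintype R] (hR : IsFrobeniusRing R)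
    (C : Submodule R (Fin n → R)) (S : Finset (Fin n)) :
    vanishingCount (dualCode C) S * Nat.card C =
      Fintype.card R ^ (n - #S) * vanishingCount C Sᶜ := by
  classical
  set ι := Sᶜ.orderEmbOfFin rfl
  have hι : ∀ ℓ, ℓ ∈ Set.range ι ↔ ℓ ∉ S := by
    intro ℓ
    rw [Finset.range_orderEmbOfFin, coe_compl, Set.mem_compl_iff, mem_coe]
  set D := C.map (LinearMap.funLeft R R ι)
  have hdual : vanishingCount (dualCode C) S = Nat.card (dualCode D) :=
    Nat.card_congr <| (Equiv.subtypeEquivRight fun v => by simp [hι]).trans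
      (dualCodeSupportedEquiv ι.injective C)
  have hcode : Nat.card C = Nat.card D * vanishingCount C Sᶜ := by
    rw [Submodule.card_eq_card_map_mul_card_ker (LinearMap.funLeft R R ι)]
    refine congrArg _ (Nat.card_congr (Equiv.subtypeEquivRight fun c => ?_))
    simp only [LinearMap.mem_ker, funext_iff, LinearMap.domRestrict_apply,
      LinearMap.funLeft_apply, Pi.zero_apply]
    rw [← Set.forall_mem_range (f := ⇑ι) (p := fun ℓ => (c : Fin n → R) ℓ = 0)]
    simp only [hι, mem_compl]
  rw [hdual, hcode, mul_left_comm, ← mul_assoc, hR, card_compl, Fintype.card_fin]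

end

theorem stmt3 {R : Type*} [CommRing R] [Fintype R] (hR : IsFrobeniusRing R)
    {n : ℕ} (C : Submodule R (Fin n → R)) :
    hwEnum (dualCode C) =
      MvPolynomial.C ((Nat.card C : ℚ)⁻¹) *
        (MvPolynomial.bind₁ (fun i : Fin 2 =>
          if i = 0 then X 0 + MvPolynomial.C ((Fintype.card R : ℚ) - 1) * X 1
          else X 0 - X 1)) (hwEnum C) := by
  have hC : (Nat.card C : ℚ) ≠ 0 := Nat.cast_ne_zero.2 Nat.card_pos.ne'
  have hdual := bind₁_hwEnum (dualCode C) X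
  rw [bind₁_X_left, AlgHom.id_apply] at hdual
  rw [hdual, bind₁_hwEnum, mul_sum]
  refine Fintype.sum_bijective compl compl_bijective _ _ fun S => ?_
  have hcount : (vanishingCount (dualCode C) S : ℚ) =
      (Nat.card C : ℚ)⁻¹ * ((Fintype.card R : ℚ) ^ (n - #S) * vanishingCount C Sᶜ) := by
    rw [eq_inv_mul_iff_mul_eq₀ hC, mul_comm]
    exact_mod_cast vanishingCount_dualCode_mul_card hR C S
  have hS : #S ≤ n := (card_le_univ S).trans_eq (Fintype.card_fin n)
  rw [card_compl, Fintype.card_fin, Nat.sub_sub_self hS, hcount]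
  simp only [Fin.isValue, ↓reduceIte, one_ne_zero, map_mul, map_pow, map_sub, map_one]
  ring

end
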